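/- arXiv:1811.07601 — 6 statements merged into one kernel-verified Lean document; each statement's English description precedes it below -/
import Mathlib

section
/- With the notation of the previous setting, suppose θ : M → N is a B-A-bimodule map. Then ∇∇(θ) = ∇_N ∘ θ − (id ⊗ θ) ∘ ∇_M is a right A-module map (hence a bimodule map) if and only if σ_N ∘ (θ ⊗ id) = (id ⊗ θ) ∘ σ_M as maps M ⊗_A Ω¹_A → Ω¹_B ⊗_B N. -/
/-!
Both connections satisfy the right Leibniz rule up to their generalized braidings, so for a
right `A`-linear `θ` the failure of `∇∇(θ)` to be right `A`-linear at `(m, a)` is exactly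
`σ_N (θ m ⊗ da) - (id ⊗ θ) (σ_M (m ⊗ da))`. Hence `∇∇(θ)` is right `A`-linear iff the two additive
maps `σ_N ∘ (θ ⊗ id)` and `(id ⊗ θ) ∘ σ_M` agree on the elements `m ⊗ da`, which generate
`M ⊗_A Ω¹_A`.
-/

section BimoduleConnection

variable {A ΩA M N ΩBM ΩBN MΩA NΩA : Type*} [AddCommGroup ΩBM] [AddCommGroup ΩBN]

def nablaNabla (nablaM : M → ΩBM) (nablaN : N → ΩBN) (θ : M → N) (idθ : ΩBM →+ ΩBN) (m : M) :
    ΩBN :=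
  nablaN (θ m) - idθ (nablaM m)

theorem nablaNabla_ract_sub_ract_nablaNabla
    {dA : A → ΩA} {ractMA : M → A → M} {ractNA : N → A → N}
    {ractBMA : ΩBM → A → ΩBM} {ractBNA : ΩBN → A → ΩBN}
    {tensMA : M → ΩA → MΩA} {tensNA : N → ΩA → NΩA}
    {nablaM : M → ΩBM} {nablaN : N → ΩBN} {σM : MΩA → ΩBM} {σN : NΩA → ΩBN}
    {θ : M → N} {idθ : ΩBM →+ ΩBN}
    (hσM : ∀ m a, nablaM (ractMA m a) = ractBMA (nablaM m) a + σM (tensMA m (dA a)))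
    (hσN : ∀ n a, nablaN (ractNA n a) = ractBNA (nablaN n) a + σN (tensNA n (dA a)))
    (hθr : ∀ m a, θ (ractMA m a) = ractNA (θ m) a)
    (hidθr : ∀ x a, idθ (ractBMA x a) = ractBNA (idθ x) a)
    (hractBNAadd : ∀ x y a, ractBNA (x + y) a = ractBNA x a + ractBNA y a) (m : M) (a : A) :
    nablaNabla nablaM nablaN θ idθ (ractMA m a)
        - ractBNA (nablaNabla nablaM nablaN θ idθ m) a
      = σN (tensNA (θ m) (dA a)) - idθ (σM (tensMA m (dA a))) := by
  have hractBNAsub : ∀ x y, ractBNA (x - y) a = ractBNA x a - ractBNA y a :=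
    (AddMonoidHom.mk' (ractBNA · a) (hractBNAadd · · a)).map_sub
  simp only [nablaNabla, hθr, hσN, hσM, map_add, hidθr, hractBNAsub]
  abel

end BimoduleConnection

/-- Notation: `MΩA`, `NΩA` stand for `M ⊗_A Ω¹_A`, `N ⊗_A Ω¹_A` and `ΩBM`, `ΩBN` for
`Ω¹_B ⊗_B M`, `Ω¹_B ⊗_B N`; `θι` is `θ ⊗ id` and `idθ` is `id ⊗ θ`. -/
theorem stmt1_general
    (A ΩA M N ΩBM ΩBN MΩA NΩA : Type)
    [AddCommGroup M] [AddCommGroup N]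
    [AddCommGroup ΩBM] [AddCommGroup ΩBN] [AddCommGroup MΩA] [AddCommGroup NΩA]
    (dA : A → ΩA)
    -- module actions
    (ractMA : M → A → M)
    (ractNA : N → A → N)
    (ractBMA : ΩBM → A → ΩBM)
    (ractBNA : ΩBN → A → ΩBN)
    -- tensoring maps
    (tensMA : M → ΩA → MΩA) (tensNA : N → ΩA → NΩA)
    -- bimodule connection data
    (nablaM : M → ΩBM) (nablaN : N → ΩBN)
    (σM : MΩA →+ ΩBM) (σN : NΩA →+ ΩBN)
    (hσM : ∀ m a, nablaM (ractMA m a) = ractBMA (nablaM m) a + σM (tensMA m (dA a)))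
    (hσN : ∀ n a, nablaN (ractNA n a) = ractBNA (nablaN n) a + σN (tensNA n (dA a)))
    -- θ is a B-A-bimodule map
    (θ : M →+ N) (idθ : ΩBM →+ ΩBN) (θι : MΩA →+ NΩA)
    (hθr : ∀ m a, θ (ractMA m a) = ractNA (θ m) a)
    (hidθr : ∀ x a, idθ (ractBMA x a) = ractBNA (idθ x) a)
    (hθι : ∀ m ξ, θι (tensMA m ξ) = tensNA (θ m) ξ)
    -- right actions are additive
    (hractBNAadd : ∀ x y a, ractBNA (x + y) a = ractBNA x a + ractBNA y a)
    -- surjectivity of the calculus: M ⊗_A Ω¹_A is generated by elements m ⊗ da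
    (hgen : AddSubgroup.closure {x : MΩA | ∃ m a, x = tensMA m (dA a)} = ⊤) :
    -- conclusion: ∇∇(θ) is a right A-module map iff σ_N ∘ (θ⊗id) = (id⊗θ) ∘ σ_M
    ((∀ m a,
        nablaN (θ (ractMA m a)) - idθ (nablaM (ractMA m a))
          = ractBNA (nablaN (θ m) - idθ (nablaM m)) a)
      ↔ (∀ x : MΩA, σN (θι x) = idθ (σM x))) := by
  have hdefect := nablaNabla_ract_sub_ract_nablaNabla (θ := θ) hσM hσN hθr hidθr hractBNAadd
  have hlinear_iff : (∀ m a, nablaN (θ (ractMA m a)) - idθ (nablaM (ractMA m a))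
        = ractBNA (nablaN (θ m) - idθ (nablaM m)) a)
      ↔ ∀ m a, σN (θι (tensMA m (dA a))) = idθ (σM (tensMA m (dA a))) := by
    simp only [hθι, ← sub_eq_zero (a := σN _), ← hdefect, nablaNabla, sub_eq_zero]
  rw [hlinear_iff]
  refine ⟨fun h => DFunLike.congr_fun (f := σN.comp θι) (g := idθ.comp σM) ?_, fun h m a => h _⟩
  exact AddMonoidHom.eq_of_eqOn_dense hgen
    (by rintro _ ⟨m, a, rfl⟩; exact h m a)

/-- For a B-A-bimodule map θ : M → N between bimodules with left
bimodule connections, ∇∇(θ) = ∇_N ∘ θ − (id⊗θ) ∘ ∇_M is a right A-module map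
(hence a bimodule map) if and only if σ_N ∘ (θ⊗id) = (id⊗θ) ∘ σ_M as maps
M ⊗_A Ω¹_A → Ω¹_B ⊗_B N.  Here MΩA, NΩA stand for M ⊗_A Ω¹_A, N ⊗_A Ω¹_A and
ΩBM, ΩBN for Ω¹_B ⊗_B M, Ω¹_B ⊗_B N; `θι` is θ ⊗ id and `idθ` is id ⊗ θ. -/
theorem stmt1
    (B A ΩB ΩA M N ΩBM ΩBN MΩA NΩA : Type)
    [Ring B] [Ring A] [Algebra ℂ B] [Algebra ℂ A]
    [AddCommGroup ΩB] [AddCommGroup ΩA] [AddCommGroup M] [AddCommGroup N]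
    [AddCommGroup ΩBM] [AddCommGroup ΩBN] [AddCommGroup MΩA] [AddCommGroup NΩA]
    (dB : B → ΩB) (dA : A → ΩA)
    -- module actions
    (smulBM : B → M → M) (ractMA : M → A → M)
    (smulBN : B → N → N) (ractNA : N → A → N)
    (smulBBM : B → ΩBM → ΩBM) (ractBMA : ΩBM → A → ΩBM)
    (smulBBN : B → ΩBN → ΩBN) (ractBNA : ΩBN → A → ΩBN)
    -- tensoring maps
    (tensM : ΩB → M → ΩBM) (tensN : ΩB → N → ΩBN)
    (tensMA : M → ΩA → MΩA) (tensNA : N → ΩA → NΩA)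
    -- bimodule connection data
    (nablaM : M → ΩBM) (nablaN : N → ΩBN)
    (σM : MΩA →+ ΩBM) (σN : NΩA →+ ΩBN)
    (hLeibM : ∀ b m, nablaM (smulBM b m) = tensM (dB b) m + smulBBM b (nablaM m))
    (hLeibN : ∀ b n, nablaN (smulBN b n) = tensN (dB b) n + smulBBN b (nablaN n))
    (hσM : ∀ m a, nablaM (ractMA m a) = ractBMA (nablaM m) a + σM (tensMA m (dA a)))
    (hσN : ∀ n a, nablaN (ractNA n a) = ractBNA (nablaN n) a + σN (tensNA n (dA a)))
    -- θ is a B-A-bimodule map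
    (θ : M →+ N) (idθ : ΩBM →+ ΩBN) (θι : MΩA →+ NΩA)
    (hθl : ∀ b m, θ (smulBM b m) = smulBN b (θ m))
    (hθr : ∀ m a, θ (ractMA m a) = ractNA (θ m) a)
    (hidθ : ∀ ω m, idθ (tensM ω m) = tensN ω (θ m))
    (hidθr : ∀ x a, idθ (ractBMA x a) = ractBNA (idθ x) a)
    (hθι : ∀ m ξ, θι (tensMA m ξ) = tensNA (θ m) ξ)
    -- right actions are additive
    (hractBNAadd : ∀ x y a, ractBNA (x + y) a = ractBNA x a + ractBNA y a)
    (hractBNAneg : ∀ x a, ractBNA (-x) a = -(ractBNA x a))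
    -- balanced tensor: m ⊗ a·ξ = m·a ⊗ ξ (left ΩA-action via A)
    (lA : A → ΩA → ΩA)
    (hbal : ∀ m a ξ, tensMA m (lA a ξ) = tensMA (ractMA m a) ξ)
    -- surjectivity of the calculus: M ⊗_A Ω¹_A is generated by elements m ⊗ da
    (hgen : AddSubgroup.closure {x : MΩA | ∃ m a, x = tensMA m (dA a)} = ⊤) :
    -- conclusion: ∇∇(θ) is a right A-module map iff σ_N ∘ (θ⊗id) = (id⊗θ) ∘ σ_M
    ((∀ m a,
        nablaN (θ (ractMA m a)) - idθ (nablaM (ractMA m a))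
          = ractBNA (nablaN (θ m) - idθ (nablaM m)) a)
      ↔ (∀ x : MΩA, σN (θι x) = idθ (σM x))) :=
  stmt1_general A ΩA M N ΩBM ΩBN MΩA NΩA dA ractMA ractNA ractBMA ractBNA tensMA tensNA nablaM
    nablaN σM σN hσM hσN θ idθ θι hθr hidθr hθι hractBNAadd hgen
end

section
/- Let M be a B-A-bimodule with a B-valued inner product ⟨·,·⟩ : M ⊗_A M̄ → B (a bimodule map with ⟨m, n̄⟩* = ⟨n, m̄⟩), B = C^∞(ℝ) with calculus Ω¹(ℝ) free on dt. Suppose the left bimodule connection (∇_M, σ_M) preserves the inner product, i.e. d⟨n, m̄⟩ = (id⊗⟨·,·⟩)(∇_M(n) ⊗ m̄) + (⟨·,·⟩⊗id)(n ⊗ ∇̃_{M̄}(m̄)). If ∇_M(m) = 0, then the positive map φ(a) = ⟨m·a, m̄⟩ satisfies dt · (dφ(a)/dt) = (id⊗⟨·,·⟩)(σ_M ⊗ id)(m ⊗ da ⊗ m̄) for all a ∈ A; in particular φ(1) is constant in time. -/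
/-- Let M be a C^∞(ℝ)-A-bimodule with a C^∞(ℝ)-valued inner product
(with Ω¹(ℝ) identified with C^∞(ℝ) via the free generator dt, so that
Ω¹(ℝ) ⊗ M ≅ M and M̄ ⊗ Ω¹(ℝ) ≅ M̄, under which the conjugate right connection
∇̃_{M̄} is m̄ ↦ (∇_M m)‾).  If the bimodule connection preserves the inner
product and ∇_M(m) = 0, then φ(a) = ⟨m·a, m̄⟩ satisfies
dt·(dφ(a)/dt) = (id⊗⟨,⟩)(σ_M ⊗ id)(m ⊗ da ⊗ m̄); in particular φ(1) is
constant in time. -/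
theorem stmt8
    (A : Type) [Ring A] [StarRing A] [Algebra ℂ A]
    (ΩA M Mbar : Type)
    [AddCommGroup ΩA] [AddCommGroup M] [AddCommGroup Mbar]
    (dA : A → ΩA)
    (hd1 : dA 1 = 0)
    -- bimodule structure on M
    (smulB : (ℝ → ℂ) → M → M) (ract : M → A → M)
    (hract0 : ∀ a, ract (0 : M) a = 0)
    -- the conjugate module and the inner product ⟨·,·⟩ : M ⊗_A M̄ → C^∞(ℝ)
    (bar : M → Mbar)
    (ip : M → Mbar → (ℝ → ℂ))
    (ipadd : ∀ x y mb, ip (x + y) mb = ip x mb + ip y mb)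
    (hbar0 : ∀ x, ip x (bar 0) = 0)
    -- the bimodule connection, with Ω¹(ℝ)⊗M identified with M
    (nabla : M → M)
    (σ : M → ΩA → M)
    (hσ0 : ∀ x, σ x 0 = 0)
    (hσrule : ∀ x a, nabla (ract x a) = ract (nabla x) a + σ x (dA a))
    -- the connection preserves the inner product (Definition of preservation,
    -- with ∇̃_{M̄}(m̄) identified with (∇_M m)‾)
    (hpres : ∀ x y t, HasDerivAt (fun u => ip x (bar y) u)
      (ip (nabla x) (bar y) t + ip x (bar (nabla y)) t) t)
    -- the element m with ∇_M(m) = 0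
    (m : M) (hm : nabla m = 0) :
    -- conclusion: dφ(a)/dt = ⟨σ_M(m ⊗ da), m̄⟩, and φ(1) is constant in time
    (∀ (a : A) (t : ℝ), HasDerivAt (fun u => ip (ract m a) (bar m) u)
        (ip (σ m (dA a)) (bar m) t) t)
    ∧ (∀ t : ℝ, HasDerivAt (fun u => ip (ract m 1) (bar m) u) 0 t) := by
  have hip0 : ∀ mb, ip 0 mb = 0 := by
    intro mb
    have h := ipadd 0 0 mb
    rw [add_zero] at h
    exact left_eq_add.mp h
  have main : ∀ (a : A) (t : ℝ), HasDerivAt (fun u => ip (ract m a) (bar m) u)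
      (ip (σ m (dA a)) (bar m) t) t := by
    intro a t
    have h := hpres (ract m a) m t
    have h1 : nabla (ract m a) = σ m (dA a) := by
      rw [hσrule, hm, hract0, zero_add]
    rw [h1, hm, hbar0] at h
    simpa using h
  refine ⟨main, fun t => ?_⟩
  have := main 1 t
  rw [hd1, hσ0, hip0] at this
  simpa using this
end

section
/- Let A be a unital *-algebra with calculus, M = C^∞(ℝ) ⊗ A with inner product ⟨f⊗a, (g⊗b)‾⟩ = f g* ⟨a, b̄⟩_A, and connection ∇_M(c) = dt ⊗ (bc + ∂c/∂t + K(dc)). If for all a ∈ A and ξ ∈ Ω¹_A one has ⟨ba + K(da) + ab*, 1̄⟩ = 0 and ⟨K(ξ*) − K(ξ)*, 1̄⟩ = 0, then ∇_M preserves the inner product, i.e. d⟨n, m̄⟩ = (id⊗⟨·,·⟩)(∇_M(n) ⊗ m̄) + (⟨·,·⟩⊗id)(n ⊗ ∇̃(m̄)) for all n, m ∈ M. -/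
/-- Let A be a unital *-algebra with calculus, M = C^∞(ℝ) ⊗ A
(modelled as smooth A-valued functions of time) with inner product
⟨f⊗a, (g⊗b)‾⟩ = f g* ⟨a, b̄⟩_A (pointwise ipA, ℂ-linear in the first and
conjugate-linear in the second slot) and connection
∇_M(c) = dt ⊗ (bc + ∂c/∂t + K(dc)).  If ⟨ba + K(da) + ab*, 1̄⟩ = 0 for all a
and ⟨K(ξ*) − K(ξ)*, 1̄⟩ = 0 for all ξ, then ∇_M preserves the inner product. -/
theorem stmt9
    (A : Type) [NormedRing A] [NormedAlgebra ℂ A] [StarRing A]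
    (ΩA : Type) [AddCommGroup ΩA]
    (lA : A → ΩA → ΩA) (rA : ΩA → A → ΩA) (dA : A → ΩA) (starΩ : ΩA → ΩA)
    (hd : ∀ a c : A, dA (a * c) = rA (dA a) c + lA a (dA c))
    (hdstar : ∀ a : A, starΩ (dA a) = dA (star a))
    (hstarext : ∀ a c : A, starΩ (lA a (dA c)) = rA (dA (star c)) (star a))
    -- the A-valued inner product ⟨a, c̄⟩_A = ipA a c
    (ipA : A → A → ℂ)
    (hipadd₁ : ∀ a a' c, ipA (a + a') c = ipA a c + ipA a' c)
    (hipsmul₁ : ∀ (z : ℂ) a c, ipA (z • a) c = z * ipA a c)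
    (hipherm : ∀ a c, star (ipA a c) = ipA c a)
    (hipbal : ∀ a x c, ipA (a * x) c = ipA a (c * star x))
    (hipcont : Continuous fun p : A × A => ipA p.1 p.2)
    -- the connection data: b ∈ C^∞(ℝ)⊗A and the right vector field K
    (b : ℝ → A) (K : ℝ → ΩA → A)
    (hKr : ∀ t ξ a, K t (rA ξ a) = K t ξ * a)
    (hKadd : ∀ t ξ η, K t (ξ + η) = K t ξ + K t η)
    -- the divergence condition and the reality condition
    (hdiv : ∀ (t : ℝ) (a : A),
      ipA (b t * a + K t (dA a) + a * star (b t)) 1 = 0)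
    (hreal : ∀ (t : ℝ) (ξ : ΩA),
      ipA (K t (starΩ ξ) - star (K t ξ)) 1 = 0) :
    -- conclusion: ∇_M preserves the inner product ⟨n, m̄⟩(t) = ipA (n t) (m t)
    ∀ (n mm : ℝ → A), ContDiff ℝ (⊤ : ℕ∞) n → ContDiff ℝ (⊤ : ℕ∞) mm → ∀ t : ℝ,
      HasDerivAt (fun u => ipA (n u) (mm u))
        (ipA (b t * n t + deriv n t + K t (dA (n t))) (mm t)
          + ipA (n t) (b t * mm t + deriv mm t + K t (dA (mm t)))) t := by
  -- basic linearity facts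
  have ip0₁ : ∀ c, ipA 0 c = 0 := by
    intro c
    have := hipsmul₁ 0 0 c
    simpa using this
  have ip0₂ : ∀ a, ipA a 0 = 0 := by
    intro a
    have := hipherm 0 a
    rw [ip0₁] at this
    simpa using this.symm
  have ipadd₂ : ∀ a c c', ipA a (c + c') = ipA a c + ipA a c' := by
    intro a c c'
    have h1 := hipherm (c + c') a
    have h2 := hipherm a c
    have h3 := hipherm a c'
    rw [hipadd₁] at h1
    calc ipA a (c + c') = star (star (ipA a (c + c'))) := (star_star _).symm
      _ = star (ipA (c + c') a) := by rw [hipherm]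
      _ = star (ipA c a + ipA c' a) := by rw [hipadd₁]
      _ = star (ipA c a) + star (ipA c' a) := by rw [star_add]
      _ = ipA a c + ipA a c' := by rw [hipherm, hipherm]
  have ipsub₁ : ∀ a a' c, ipA (a - a') c = ipA a c - ipA a' c := by
    intro a a' c
    have := hipadd₁ (a - a') a' c
    rw [sub_add_cancel] at this
    linear_combination -this
  have ipsmulR₁ : ∀ (r : ℝ) a c, ipA (r • a) c = r * ipA a c := by
    intro r a c
    have : (r • a : A) = ((r : ℂ)) • a := rfl
    rw [this, hipsmul₁]
  have ipsmulR₂ : ∀ (r : ℝ) a c, ipA a (r • c) = r * ipA a c := by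
    intro r a c
    calc ipA a (r • c) = star (star (ipA a (r • c))) := (star_star _).symm
      _ = star (ipA (r • c) a) := by rw [hipherm]
      _ = star ((r : ℂ) * ipA c a) := by rw [ipsmulR₁]
      _ = (r : ℂ) * star (ipA c a) := by rw [star_mul']; simp
      _ = r * ipA a c := by rw [hipherm]
  -- F1 : ipA x c = ipA (x * star c) 1
  have F1 : ∀ x c, ipA x c = ipA (x * star c) 1 := by
    intro x c
    rw [hipbal, one_mul, star_star]
  -- F2 : ipA (star x) 1 = star (ipA x 1)
  have F2 : ∀ x, ipA (star x) 1 = star (ipA x 1) := by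
    intro x
    have h := hipbal 1 (star x) 1
    rw [one_mul, star_star, one_mul] at h
    rw [h, ← hipherm]
  -- the key algebraic identity
  have key : ∀ (t : ℝ) (a c : A),
      ipA (b t * a + K t (dA a)) c + ipA a (b t * c + K t (dA c)) = 0 := by
    intro t a c
    have hD := hdiv t (a * star c)
    have hdd : dA (a * star c) = rA (dA a) (star c) + lA a (dA (star c)) := hd a (star c)
    set η := lA a (dA (star c)) with hη
    have hKη : K t (dA (a * star c)) = K t (dA a) * star c + K t η := by
      rw [hdd, hKadd, hKr]
    -- term3 via hreal
    have hsη : starΩ η = rA (dA c) (star a) := by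
      rw [hη, hstarext, star_star]
    have hR := hreal t η
    rw [ipsub₁, hsη, hKr, sub_eq_zero] at hR
    -- hR : ipA (K t (dA c) * star a) 1 = ipA (star (K t η)) 1
    have term3 : ipA (K t η) 1 = ipA a (K t (dA c)) := by
      have h1 : ipA (K t (dA c) * star a) 1 = star (ipA (K t η) 1) := by
        rw [hR, F2]
      have h2 : ipA (K t (dA c)) a = star (ipA (K t η) 1) := by
        rw [F1 (K t (dA c)) a]; exact h1
      calc ipA (K t η) 1 = star (star (ipA (K t η) 1)) := (star_star _).symm
        _ = star (ipA (K t (dA c)) a) := by rw [h2]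
        _ = ipA a (K t (dA c)) := hipherm _ _
    -- term4
    have term4 : ipA (a * star c * star (b t)) 1 = ipA a (b t * c) := by
      rw [mul_assoc, hipbal]
      congr 1
      rw [one_mul, star_mul, star_star, star_star]
    -- term1+2
    have term12 : ipA (b t * a * star c) 1 + ipA (K t (dA a) * star c) 1
        = ipA (b t * a + K t (dA a)) c := by
      rw [F1 (b t * a + K t (dA a)) c, add_mul, hipadd₁]
    -- expand hD
    rw [hipadd₁, hipadd₁, hKη, hipadd₁] at hD
    -- hD : ipA (b t * (a * star c)) 1 + (ipA (K t (dA a) * star c) 1 + ipA (K t η) 1)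
    --      + ipA (a * star c * star (b t)) 1 = 0
    rw [ipadd₂ a (b t * c) (K t (dA c))]
    rw [← mul_assoc] at hD
    linear_combination hD - term12 - term3 - term4
  -- the bilinear map is bounded
  have hbound : ∃ C : ℝ, ∀ x y : A, ‖ipA x y‖ ≤ C * ‖x‖ * ‖y‖ := by
    have hc : ContinuousAt (fun p : A × A => ipA p.1 p.2) ((0 : A), (0 : A)) :=
      hipcont.continuousAt
    rw [Metric.continuousAt_iff] at hc
    obtain ⟨δ, hδ, hball⟩ := hc 1 one_pos
    refine ⟨4 / δ ^ 2, fun x y => ?_⟩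
    rcases eq_or_ne x 0 with rfl | hx
    · rw [ip0₁]; simp
    rcases eq_or_ne y 0 with rfl | hy
    · rw [ip0₂]; simp
    have hnx : (0 : ℝ) < ‖x‖ := norm_pos_iff.mpr hx
    have hny : (0 : ℝ) < ‖y‖ := norm_pos_iff.mpr hy
    set s : ℝ := (δ / 2) / ‖x‖ with hs
    set r : ℝ := (δ / 2) / ‖y‖ with hr
    have hspos : 0 < s := by positivity
    have hrpos : 0 < r := by positivity
    have hsx : ‖s • x‖ = δ / 2 := by
      rw [norm_smul, Real.norm_eq_abs, abs_of_pos hspos, hs]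
      field_simp
    have hry : ‖r • y‖ = δ / 2 := by
      rw [norm_smul, Real.norm_eq_abs, abs_of_pos hrpos, hr]
      field_simp
    have hdist : dist ((s • x, r • y) : A × A) (0, 0) < δ := by
      rw [Prod.dist_eq]
      simp only [dist_zero_right, hsx, hry]
      rw [max_self]
      linarith
    have hlt := hball hdist
    rw [ip0₁, dist_zero_right] at hlt
    have heq : ipA (s • x) (r • y) = (s : ℂ) * ((r : ℂ) * ipA x y) := by
      rw [ipsmulR₁, ipsmulR₂]
    have hnorm : s * (r * ‖ipA x y‖) < 1 := by
      calc s * (r * ‖ipA x y‖) = ‖ipA (s • x) (r • y)‖ := by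
            rw [heq, norm_mul, norm_mul, Complex.norm_real, Complex.norm_real,
              Real.norm_eq_abs, Real.norm_eq_abs, abs_of_pos hspos, abs_of_pos hrpos]
        _ < 1 := hlt
    have : ‖ipA x y‖ < (1 / (s * r)) := by
      rw [lt_div_iff₀ (by positivity)]
      nlinarith [norm_nonneg (ipA x y)]
    have hval2 : 1 / (s * r) = 4 / δ ^ 2 * ‖x‖ * ‖y‖ := by
      rw [hs, hr]
      field_simp
      ring
    rw [hval2] at this
    exact this.le
  -- construct the continuous bilinear map
  let B : A →ₗ[ℝ] A →ₗ[ℝ] ℂ := LinearMap.mk₂ ℝ ipA hipadd₁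
    (fun r a c => by rw [ipsmulR₁]; rfl) ipadd₂
    (fun r a c => by rw [ipsmulR₂]; rfl)
  let Bc : A →L[ℝ] A →L[ℝ] ℂ := LinearMap.mkContinuousOfExistsBound₂ B hbound
  intro n mm hn hmm t
  have hn' : HasDerivAt n (deriv n t) t :=
    ((hn.differentiable (by simp)) t).hasDerivAt
  have hm' : HasDerivAt mm (deriv mm t) t :=
    ((hmm.differentiable (by simp)) t).hasDerivAt
  have hBn : HasDerivAt (fun u => Bc (n u)) (Bc (deriv n t)) t :=
    Bc.hasFDerivAt.comp_hasDerivAt t hn'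
  have hD : HasDerivAt (fun u => Bc (n u) (mm u))
      (Bc (deriv n t) (mm t) + Bc (n t) (deriv mm t)) t := hBn.clm_apply hm'
  have hfun : (fun u => Bc (n u) (mm u)) = fun u => ipA (n u) (mm u) := rfl
  have hval : Bc (deriv n t) (mm t) + Bc (n t) (deriv mm t)
      = ipA (deriv n t) (mm t) + ipA (n t) (deriv mm t) := rfl
  rw [hfun, hval] at hD
  have expand : ipA (b t * n t + deriv n t + K t (dA (n t))) (mm t)
      + ipA (n t) (b t * mm t + deriv mm t + K t (dA (mm t)))
      = ipA (deriv n t) (mm t) + ipA (n t) (deriv mm t) := by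
    have hk := key t (n t) (mm t)
    rw [hipadd₁, hipadd₁, ipadd₂, ipadd₂] at *
    linear_combination hk
  rw [expand]
  exact hD
end

section
/- Let A = ℂ(ℤ_n) with the bicovariant calculus generated by e_{+1}, e_{−1} with relations e_a f = R_a(f) e_a, and inner product ⟨a, c̄⟩ = Σ_{i∈ℤ_n} a(i)c(i)*. The reality condition ⟨K((a e_{±1})*) − K(a e_{±1})*, 1̄⟩ = 0 for all a ∈ A holds if and only if K_− = −R_{+1}(K_+*), where K_± = K(e_{±1}). -/
/-- On A = ℂ(ℤ_n) with the bicovariant calculus generated by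
e_{+1}, e_{−1} (relations e_a f = R_a(f) e_a with R_a(f)(i) = f(i+a), star
structure e_{±1}* = −e_{∓1}) and inner product ⟨a, c̄⟩ = Σ_i a(i)c(i)*, the
reality condition ⟨K((a e_{±1})*) − K(a e_{±1})*, 1̄⟩ = 0 for all a ∈ A holds
if and only if K_− = −R_{+1}(K_+*), where K_± = K(e_{±1}).

Computation of the entries: a e_{+1} has (a e_{+1})* = −R_{−1}(a*) e_{−1}, so
K((a e_{+1})*) = −K_− R_{+1}(R_{−1}(a*)) at i is −K_−(i)·a(i)*, while
K(a e_{+1}) = K_+ R_{−1}(a); similarly for e_{−1}. -/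
theorem stmt11
    (n : ℕ) [NeZero n]
    (Kp Km : ZMod n → ℂ) :
    ((∀ a : ZMod n → ℂ,
        -- ⟨K((a e_{+1})*) − K(a e_{+1})*, 1̄⟩ = 0
        (∑ i : ZMod n,
          (-(Km i * star (a i)) - star (Kp i * a (i - 1)))) = 0)
      ∧ (∀ a : ZMod n → ℂ,
        -- ⟨K((a e_{−1})*) − K(a e_{−1})*, 1̄⟩ = 0
        (∑ i : ZMod n,
          (-(Kp i * star (a i)) - star (Km i * a (i + 1)))) = 0))
    ↔ (∀ i : ZMod n, Km i = -star (Kp (i + 1))) := by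
  constructor
  · rintro ⟨h1, -⟩ i
    have h := h1 (fun j => if j = i then 1 else 0)
    have key : ∀ j : ZMod n,
        -(Km j * star ((fun j => if j = i then (1:ℂ) else 0) j))
          - star (Kp j * (fun j => if j = i then (1:ℂ) else 0) (j - 1))
        = -(if j = i then Km j else 0) - (if j = i + 1 then star (Kp j) else 0) := by
      intro j
      have : (j - 1 = i) ↔ (j = i + 1) := sub_eq_iff_eq_add
      simp [apply_ite (star : ℂ → ℂ), this, mul_ite]
    rw [Finset.sum_congr rfl fun j _ => key j] at h
    simp [Finset.sum_sub_distrib, Finset.sum_ite_eq'] at h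
    rw [← starRingEnd_apply]
    linear_combination -h
  · intro h
    have key : ∀ (a : ZMod n → ℂ) (i : ZMod n),
        -(Km i * star (a i)) - star (Kp i * a (i - 1))
        = star (Kp (i+1)) * star (a i) - star (Kp i) * star (a (i - 1)) := by
      intro a i; rw [h i, star_mul']; ring
    have key2 : ∀ (a : ZMod n → ℂ) (i : ZMod n),
        -(Kp i * star (a i)) - star (Km i * a (i + 1))
        = Kp (i+1) * star (a (i+1)) - Kp i * star (a i) := by
      intro a i
      have : star (Km i) = -Kp (i+1) := by rw [h i]; simp
      rw [star_mul', this]; ring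
    constructor <;> intro a
    · rw [Finset.sum_congr rfl fun i _ => key a i, Finset.sum_sub_distrib, sub_eq_zero]
      exact Fintype.sum_equiv (Equiv.addRight (1 : ZMod n)) _ _ (fun i => by simp)
    · rw [Finset.sum_congr rfl fun i _ => key2 a i, Finset.sum_sub_distrib, sub_eq_zero]
      exact Fintype.sum_equiv (Equiv.addRight (1 : ZMod n)) _ _ (fun i => by simp)
end

section
/- Let A = M₂(ℂ) with calculus Ω¹ freely generated by central elements s¹, s² and da = s¹[E₁₂, a] + s²[E₂₁, a], and inner product ⟨c, ē⟩ = tr(c e*). For a right vector field K with K(sⁱ) = K_i ∈ M₂(ℂ), the reality condition ⟨K((sⁱa)*) − K(sⁱa)*, 1̄⟩ = 0 for all a ∈ M₂(ℂ) (using (s¹)* = −s²) holds if and only if K₁* = −K₂. Moreover, under this condition the element b = ½([E₁₂, K₁] + [E₂₁, K₂]) is Hermitian and satisfies the divergence condition tr(a(b + b* − [E₁₂,K₁] − [E₂₁,K₂])) = 0 for all a ∈ M₂(ℂ). -/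
/-
The reality condition says tr(a* (K₂ + K₁*)) = 0 for all a; taking a = K₂ + K₁* turns it into
a vanishing sum of squares |(K₂ + K₁*)ᵢⱼ|². When K₁* = −K₂, the involution swaps the commutators
[E₁₂, K₁] and [E₂₁, K₂] because E₁₂* = E₂₁, so their sum is Hermitian and equals b + b*.
-/

open Matrix

open scoped ComplexOrder

theorem star_eq_neg_comm {R : Type*} [AddGroup R] [StarAddMonoid R] {a b : R} :
    star a = -b ↔ star b = -a := by
  have key : ∀ a b : R, star a = -b → star b = -a := fun a b h => by
    rw [← neg_neg b, ← h, star_neg, star_star]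
  exact ⟨key a b, key b a⟩

theorem isSelfAdjoint_commutator_add_star_commutator {R : Type*} [Ring R] [StarRing R]
    {x k₁ k₂ : R} (hk : star k₁ = -k₂) :
    IsSelfAdjoint ((x * k₁ - k₁ * x) + (star x * k₂ - k₂ * star x)) := by
  have hk' : star k₂ = -k₁ := star_eq_neg_comm.mp hk
  rw [isSelfAdjoint_iff]
  simp only [star_add, star_sub, star_mul, star_star, hk, hk', neg_mul, mul_neg]
  abel

section Trace

variable {n R : Type*} [Fintype n] [CommRing R] [PartialOrder R] [StarRing R]
  [StarOrderedRing R] [NoZeroDivisors R]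

theorem forall_trace_neg_mul_conjTranspose_sub_eq_zero_iff (K L : Matrix n n R) :
    (∀ a : Matrix n n R, trace (-(K * aᴴ) - aᴴ * L) = 0) ↔ L = -K := by
  have expand (a : Matrix n n R) : trace (-(K * aᴴ) - aᴴ * L) = -trace (aᴴ * (K + L)) := by
    rw [trace_sub, trace_neg, trace_mul_comm K, Matrix.mul_add, trace_add]
    ring
  simp only [expand, neg_eq_zero, eq_neg_iff_add_eq_zero, add_comm L]
  exact ⟨fun h => trace_conjTranspose_mul_self_eq_zero_iff.mp (h _),
    fun h a => by rw [h, Matrix.mul_zero, trace_zero]⟩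

end Trace

/-- On A = M₂(ℂ) with the calculus da = s¹[E₁₂,a] + s²[E₂₁,a]
(central generators, (s¹)* = −s²) and inner product ⟨c, ē⟩ = tr(c e*), for a
right vector field K with K(sⁱ) = K_i the reality condition
⟨K((sⁱa)*) − K(sⁱa)*, 1̄⟩ = 0 for all a (where K((s¹a)*) = K(−s²a*) = −K₂a*
and K(sⁱa)* = (K_i a)* = a* K_i*) holds iff K₁* = −K₂.  Moreover, under this
condition b = ½([E₁₂,K₁] + [E₂₁,K₂]) is Hermitian and satisfies the divergence
condition tr(a(b + b* − [E₁₂,K₁] − [E₂₁,K₂])) = 0 for all a. -/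
theorem stmt13
    (K₁ K₂ : Matrix (Fin 2) (Fin 2) ℂ) :
    letI E12 : Matrix (Fin 2) (Fin 2) ℂ := Matrix.single 0 1 1
    letI E21 : Matrix (Fin 2) (Fin 2) ℂ := Matrix.single 1 0 1
    letI b : Matrix (Fin 2) (Fin 2) ℂ :=
      (1/2 : ℂ) • ((E12 * K₁ - K₁ * E12) + (E21 * K₂ - K₂ * E21))
    (((∀ a : Matrix (Fin 2) (Fin 2) ℂ,
          Matrix.trace (-(K₂ * aᴴ) - aᴴ * K₁ᴴ) = 0)
        ∧ (∀ a : Matrix (Fin 2) (Fin 2) ℂ,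
          Matrix.trace (-(K₁ * aᴴ) - aᴴ * K₂ᴴ) = 0))
      ↔ K₁ᴴ = -K₂)
    ∧ (K₁ᴴ = -K₂ →
        bᴴ = b ∧
        ∀ a : Matrix (Fin 2) (Fin 2) ℂ,
          Matrix.trace (a * (b + bᴴ - (E12 * K₁ - K₁ * E12)
            - (E21 * K₂ - K₂ * E21))) = 0) := by
  refine ⟨?_, fun hK => ?_⟩
  · rw [forall_trace_neg_mul_conjTranspose_sub_eq_zero_iff,
      forall_trace_neg_mul_conjTranspose_sub_eq_zero_iff]
    exact ⟨And.left, fun h => ⟨h, star_eq_neg_comm.mp h⟩⟩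
  have hE : star (single 0 1 1 : Matrix (Fin 2) (Fin 2) ℂ) = single 1 0 1 := by
    simp [star_eq_conjTranspose]
  have hc := isSelfAdjoint_commutator_add_star_commutator (x := single 0 1 1) hK
  rw [hE] at hc
  set c := single 0 1 1 * K₁ - K₁ * single 0 1 1 + (single 1 0 1 * K₂ - K₂ * single 1 0 1)
    with hc_def
  have hb : ((1 / 2 : ℂ) • c)ᴴ = (1 / 2 : ℂ) • c :=
    ((by simp [isSelfAdjoint_iff] : IsSelfAdjoint (1 / 2 : ℂ)).smul hc).star_eq
  refine ⟨hb, fun a => ?_⟩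
  rw [hb, ← add_smul, add_halves, one_smul, hc_def, sub_sub, sub_self, Matrix.mul_zero,
    trace_zero]
end

section
/- Let A = ℂ(ℤ_n) with calculus generated by e_{±1}, connection ∇(e_{±1}) = 0 on Ω¹_A (so σ flips the generators), and K with K_± = K(e_{±1}). The geodesic velocity equation ∂K(e_{±1})/∂t = K(b e_{±1}) − b K(e_{±1}) − K(dK(e_{±1})) is equivalent, assuming the braiding condition K_− R_{+1}(K_+) = K_+ R_{−1}(K_−), to the pair of equations ∂K_+/∂t = K_+ (R_{−1}(B) − B) and ∂K_−/∂t = K_− (R_{+1}(B) − B), where B = b + K_+ + K_−. -/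
/-- On A = ℂ(ℤ_n) with the calculus generated by e_{±1}
(e_a f = R_a(f) e_a, R_a(f)(i) = f(i+a)), connection ∇(e_{±1}) = 0 on Ω¹_A and
K_± = K(e_{±1}), the geodesic velocity equation
∂K_±/∂t = K(b e_{±1}) − b K_± − K(dK_±), i.e.
∂K_±/∂t = K_± R_{∓1}(b) − b K_± − K_+(K_± − R_{−1}K_±) − K_−(K_± − R_{+1}K_±),
is equivalent, assuming the braiding condition K_− R_{+1}(K_+) = K_+ R_{−1}(K_−),
to the pair ∂K_+/∂t = K_+(R_{−1}(B) − B), ∂K_−/∂t = K_−(R_{+1}(B) − B) with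
B = b + K_+ + K_−. -/
theorem stmt19
    (n : ℕ) [NeZero n]
    (Kp Km b : ℝ → ZMod n → ℂ)
    -- the braiding condition K(K⊗id)(σ−id)=0:  K_−(i)K_+(i+1) = K_−(i−1)K_+(i)
    (hbraid : ∀ (t : ℝ) (i : ZMod n),
      Km t i * Kp t (i + 1) = Km t (i - 1) * Kp t i) :
    letI B : ℝ → ZMod n → ℂ := fun t i => b t i + Kp t i + Km t i
    ((∀ (t : ℝ) (i : ZMod n),
        deriv (fun u => Kp u i) t
          = Kp t i * b t (i - 1) - b t i * Kp t i
            - Kp t i * (Kp t i - Kp t (i - 1))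
            - Km t i * (Kp t i - Kp t (i + 1))
      ∧ deriv (fun u => Km u i) t
          = Km t i * b t (i + 1) - b t i * Km t i
            - Kp t i * (Km t i - Km t (i - 1))
            - Km t i * (Km t i - Km t (i + 1)))
      ↔ (∀ (t : ℝ) (i : ZMod n),
        deriv (fun u => Kp u i) t = Kp t i * (B t (i - 1) - B t i)
        ∧ deriv (fun u => Km u i) t = Km t i * (B t (i + 1) - B t i))) := by
  simp only []
  constructor
  · intro h t i
    obtain ⟨h1, h2⟩ := h t i
    have hb := hbraid t i
    exact ⟨by linear_combination h1 + hb, by linear_combination h2 - hb⟩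
  · intro h t i
    obtain ⟨h1, h2⟩ := h t i
    have hb := hbraid t i
    exact ⟨by linear_combination h1 - hb, by linear_combination h2 + hb⟩
end
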